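/- arXiv:1909.08081 — 3 statements merged into one kernel-verified Lean document; each statement's English description precedes it below -/
import Mathlib

section
/- Let f(x) and s be {0,1}-valued random variables such that the Hoeffding identity holds and sup-norm of the joint CDF deviation is bounded by the covariance: |F_{f,s}(0,0) − F_f(0)F_s(0)| ≤ |cov(f(x), s)|. If |cov(f(x), s)| ≤ ρ, s₀ = P(s=0) > 0 and s₁ = P(s=1) > 0, then the statistical parity SP(f) = |P(f(x)=1 | s=1) − P(f(x)=1 | s=0)| satisfies SP(f) ≤ ρ / (s₀ s₁). -/
open MeasureTheory

noncomputable def cov {Ω : Type*} [MeasurableSpace Ω] (μ : Measure Ω) (X Y : Ω → ℝ) : ℝ :=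
  (∫ ω, X ω * Y ω ∂μ) - (∫ ω, X ω ∂μ) * (∫ ω, Y ω ∂μ)

/-- for {0,1}-valued f(x) and s, if the joint-CDF deviation at (0,0)
is bounded by |cov(f,s)| and |cov(f,s)| ≤ ρ, then statistical parity
SP(f) ≤ ρ / (s₀ s₁). -/
theorem stmt_3 {Ω : Type*} [MeasurableSpace Ω] (μ : Measure Ω) [IsProbabilityMeasure μ]
    (f s : Ω → ℝ) (ρ : ℝ)
    (hf01 : ∀ ω, f ω = 0 ∨ f ω = 1) (hs01 : ∀ ω, s ω = 0 ∨ s ω = 1)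
    (hfm : Measurable f) (hsm : Measurable s)
    (s₀ s₁ : ℝ)
    (hs₀ : s₀ = (μ {ω | s ω = 0}).toReal) (hs₁ : s₁ = (μ {ω | s ω = 1}).toReal)
    (hs₀pos : 0 < s₀) (hs₁pos : 0 < s₁)
    (hhoeff : |(μ {ω | f ω = 0 ∧ s ω = 0}).toReal
        - (μ {ω | f ω = 0}).toReal * (μ {ω | s ω = 0}).toReal| ≤ |cov μ f s|)
    (hfair : |cov μ f s| ≤ ρ) :
    |(μ {ω | f ω = 1 ∧ s ω = 1}).toReal / s₁
      - (μ {ω | f ω = 1 ∧ s ω = 0}).toReal / s₀| ≤ ρ / (s₀ * s₁) := by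
  classical
  set A : Set Ω := {ω | f ω = 0 ∧ s ω = 0} with hA
  set B : Set Ω := {ω | f ω = 0 ∧ s ω = 1} with hB
  set C : Set Ω := {ω | f ω = 1 ∧ s ω = 0} with hC
  set D : Set Ω := {ω | f ω = 1 ∧ s ω = 1} with hD
  have mset : ∀ (u v : ℝ), MeasurableSet {ω | f ω = u ∧ s ω = v} := by
    intro u v
    exact (hfm (measurableSet_singleton u)).inter (hsm (measurableSet_singleton v))
  have mA : MeasurableSet A := mset 0 0
  have mB : MeasurableSet B := mset 0 1
  have mC : MeasurableSet C := mset 1 0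
  have mD : MeasurableSet D := mset 1 1
  set a : ℝ := (μ A).toReal with ha
  set b : ℝ := (μ B).toReal with hb
  set c : ℝ := (μ C).toReal with hc
  set d : ℝ := (μ D).toReal with hd
  have hne10 : (1:ℝ) ≠ 0 := one_ne_zero
  -- disjointness helper
  have disjfs : ∀ {u v u' v' : ℝ}, (u ≠ u' ∨ v ≠ v') →
      Disjoint {ω | f ω = u ∧ s ω = v} {ω | f ω = u' ∧ s ω = v'} := by
    intro u v u' v' h
    rw [Set.disjoint_left]
    rintro ω ⟨h1, h2⟩ ⟨h3, h4⟩
    rcases h with h | h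
    · exact h (h1 ▸ h3 ▸ rfl)
    · exact h (h2 ▸ h4 ▸ rfl)
  have addReal : ∀ (X Y : Set Ω), MeasurableSet Y → Disjoint X Y →
      (μ (X ∪ Y)).toReal = (μ X).toReal + (μ Y).toReal := by
    intro X Y mY dXY
    rw [measure_union dXY mY, ENNReal.toReal_add (measure_ne_top μ X) (measure_ne_top μ Y)]
  have hs0eq : (μ {ω | s ω = 0}).toReal = a + c := by
    have : {ω | s ω = 0} = A ∪ C := by
      ext ω; rcases hf01 ω with h | h <;> simp [hA, hC, h]
    rw [this, addReal A C mC (disjfs (Or.inl (by norm_num)))]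
  have hs1eq : (μ {ω | s ω = 1}).toReal = b + d := by
    have : {ω | s ω = 1} = B ∪ D := by
      ext ω; rcases hf01 ω with h | h <;> simp [hB, hD, h]
    rw [this, addReal B D mD (disjfs (Or.inl (by norm_num)))]
  have hf0eq : (μ {ω | f ω = 0}).toReal = a + b := by
    have : {ω | f ω = 0} = A ∪ B := by
      ext ω; rcases hs01 ω with h | h <;> simp [hA, hB, h]
    rw [this, addReal A B mB (disjfs (Or.inr (by norm_num)))]
  have htot : a + b + c + d = 1 := by
    have huniv : (Set.univ : Set Ω) = (A ∪ B) ∪ (C ∪ D) := by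
      ext ω
      rcases hf01 ω with h | h <;> rcases hs01 ω with h' | h' <;>
        simp [hA, hB, hC, hD, h, h']
    have hdisj : Disjoint (A ∪ B) (C ∪ D) := by
      apply Set.disjoint_union_left.mpr
      constructor <;> apply Set.disjoint_union_right.mpr <;>
        exact ⟨disjfs (Or.inl (by norm_num)), disjfs (Or.inl (by norm_num))⟩
    have h1 : (μ (Set.univ : Set Ω)).toReal = 1 := by simp
    rw [huniv, addReal _ _ (mC.union mD) hdisj,
      addReal A B mB (disjfs (Or.inr (by norm_num))),
      addReal C D mD (disjfs (Or.inr (by norm_num)))] at h1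
    linarith
  -- key identity
  have hkey : a - (a + b) * (a + c) = d * s₀ - c * s₁ := by
    rw [hs₀, hs₁, hs0eq, hs1eq]
    linear_combination (-a) * htot
  have hbound : |d * s₀ - c * s₁| ≤ ρ := by
    rw [← hkey]
    rw [hf0eq, hs0eq] at hhoeff
    exact hhoeff.trans hfair
  have hs₀ne : s₀ ≠ 0 := ne_of_gt hs₀pos
  have hs₁ne : s₁ ≠ 0 := ne_of_gt hs₁pos
  have heq : d / s₁ - c / s₀ = (d * s₀ - c * s₁) / (s₀ * s₁) := by
    field_simp
  rw [heq, abs_div, abs_of_pos (mul_pos hs₀pos hs₁pos)]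
  gcongr
end

section
/- Let Y be noncentral chi-squared with k degrees of freedom and noncentrality η ≥ 0. Then for 0 ≤ c < 1: P(Y ≥ (1+c)k) ≤ exp(ηc/(4−2c) − c²k/8). -/
/-!
With `λ = c / 4`, the Chernoff bound gives
`P(Y ≥ (1 + c) k) ≤ e^{-λ(1+c)k} E[e^{λY}]`, and `E[e^{λY}] = e^{ηλ/(1-2λ)} (1-2λ)^{-k/2}`
by independence and completing the square in one Gaussian integral.
Finally `(1 - 2λ)^{-1/2} ≤ e^{λ + 2λ²}` turns `e^{-λ(1+c)k} (1-2λ)^{-k/2}` into `e^{-c²k/8}`.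
-/

open MeasureTheory ProbabilityTheory Real

lemma gaussianPDFReal_one_mul_exp_mul_sq {t : ℝ} (ht : t < 1 / 2) (m x : ℝ) :
    gaussianPDFReal m 1 x * exp (t * x ^ 2)
      = (√(2 * π))⁻¹ * exp (t * m ^ 2 / (1 - 2 * t))
          * exp (-((1 - 2 * t) / 2) * (x - m / (1 - 2 * t)) ^ 2) := by
  have h : (1 : ℝ) - 2 * t ≠ 0 := by linarith
  have completeSquare : -(x - m) ^ 2 / 2 + t * x ^ 2
      = t * m ^ 2 / (1 - 2 * t) + -((1 - 2 * t) / 2) * (x - m / (1 - 2 * t)) ^ 2 := by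
    field_simp
    ring
  simp only [gaussianPDFReal, NNReal.coe_one, mul_one]
  rw [mul_assoc, ← exp_add, mul_assoc, ← exp_add, completeSquare]

lemma mgf_sq_gaussianReal {t : ℝ} (ht : t < 1 / 2) (m : ℝ) :
    mgf (fun x ↦ x ^ 2) (gaussianReal m 1) t = exp (t * m ^ 2 / (1 - 2 * t)) / √(1 - 2 * t) := by
  have h : 0 < 1 - 2 * t := by linarith
  simp only [mgf, integral_gaussianReal_eq_integral_smul one_ne_zero, smul_eq_mul,
    gaussianPDFReal_one_mul_exp_mul_sq ht]
  rw [integral_const_mul, integral_sub_right_eq_self (fun x ↦ exp (-((1 - 2 * t) / 2) * x ^ 2)),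
    integral_gaussian, div_div_eq_mul_div, sqrt_div' _ h.le, sqrt_mul' _ two_pos.le]
  have : √(2 * π) ≠ 0 := by positivity
  field_simp
  rw [sqrt_mul' _ pi_pos.le, mul_comm]

lemma mgf_sq_of_map_eq_gaussianReal {Ω : Type*} [MeasurableSpace Ω] {μ : Measure Ω}
    {X : Ω → ℝ} {m t : ℝ} (hX : AEMeasurable X μ) (hlaw : μ.map X = gaussianReal m 1)
    (ht : t < 1 / 2) :
    mgf (fun ω ↦ X ω ^ 2) μ t = exp (t * m ^ 2 / (1 - 2 * t)) / √(1 - 2 * t) := by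
  rw [← mgf_sq_gaussianReal ht, ← hlaw, mgf_map hX (by fun_prop)]
  rfl

theorem mgf_sum_sq_of_iIndepFun {Ω ι : Type*} [MeasurableSpace Ω] {μ : Measure Ω} [Fintype ι]
    {G : ι → Ω → ℝ} {m : ι → ℝ} {t : ℝ} (hmeas : ∀ i, Measurable (G i))
    (hindep : iIndepFun G μ) (hlaw : ∀ i, μ.map (G i) = gaussianReal (m i) 1)
    (ht : t < 1 / 2) :
    mgf (fun ω ↦ ∑ i, G i ω ^ 2) μ t
      = exp (t * (∑ i, m i ^ 2) / (1 - 2 * t)) / √(1 - 2 * t) ^ Fintype.card ι := by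
  have hsum : (fun ω ↦ ∑ i, G i ω ^ 2) = ∑ i, fun ω ↦ G i ω ^ 2 := by
    ext ω
    simp only [Finset.sum_apply]
  have hindepSq : iIndepFun (fun i ω ↦ G i ω ^ 2) μ :=
    hindep.comp (fun _ x ↦ x ^ 2) fun _ ↦ by fun_prop
  rw [hsum, hindepSq.mgf_sum (fun i ↦ by fun_prop) Finset.univ]
  simp only [fun i ↦ mgf_sq_of_map_eq_gaussianReal (hmeas i).aemeasurable (hlaw i) ht]
  rw [Finset.prod_div_distrib, ← exp_sum, Finset.prod_const, Finset.card_univ, Finset.mul_sum,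
    Finset.sum_div]

lemma exp_neg_add_sq_le_one_sub {x : ℝ} (hx0 : 0 ≤ x) (hx : x ≤ 1 / 2) :
    exp (-(x + x ^ 2)) ≤ 1 - x := by
  have hquad := quadratic_le_exp_of_nonneg (show 0 ≤ x + x ^ 2 by positivity)
  rw [exp_neg, inv_le_iff_one_le_mul₀ (exp_pos _)]
  nlinarith [mul_le_mul_of_nonneg_left hquad (show 0 ≤ 1 - x by linarith)]

lemma inv_sqrt_one_sub_two_mul_le_exp {t : ℝ} (ht0 : 0 ≤ t) (ht : t ≤ 1 / 4) :
    (√(1 - 2 * t))⁻¹ ≤ exp (t + 2 * t ^ 2) := by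
  have hsqrt : exp (-(t + 2 * t ^ 2)) ≤ √(1 - 2 * t) := by
    rw [le_sqrt (exp_pos _).le (by linarith), sq, ← exp_add]
    convert exp_neg_add_sq_le_one_sub (x := 2 * t) (by linarith) (by linarith) using 2
    ring
  calc (√(1 - 2 * t))⁻¹ ≤ (exp (-(t + 2 * t ^ 2)))⁻¹ := inv_anti₀ (exp_pos _) hsqrt
    _ = exp (t + 2 * t ^ 2) := by rw [exp_neg, inv_inv]

/-- upper tail of a noncentral chi-squared variable:
P(Y ≥ (1+c)k) ≤ exp(ηc/(4−2c) − c²k/8) for 0 ≤ c < 1. -/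
theorem stmt_11 {Ω : Type*} [MeasurableSpace Ω] (μ : Measure Ω) [IsProbabilityMeasure μ]
    (k : ℕ) (G : Fin k → Ω → ℝ) (means : Fin k → ℝ) (η : ℝ)
    (hmeas : ∀ i, Measurable (G i))
    (hindep : iIndepFun G μ)
    (hlaw : ∀ i, Measure.map (G i) μ = gaussianReal (means i) 1)
    (hη : η = ∑ i, (means i) ^ 2)
    (c : ℝ) (hc0 : 0 ≤ c) (hc1 : c < 1) :
    (μ {ω | (1 + c) * k ≤ ∑ i, (G i ω) ^ 2}).toReal
      ≤ Real.exp (η * c / (4 - 2 * c) - c ^ 2 * k / 8) := by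
  set t := c / 4 with ht
  have hmgf := mgf_sum_sq_of_iIndepFun hmeas hindep hlaw (show t < 1 / 2 by linarith)
  rw [Fintype.card_fin, ← hη] at hmgf
  -- `mgf` is `0` off integrability, so the positive closed form certifies integrability.
  have hint : Integrable (fun ω ↦ exp (t * ∑ i, G i ω ^ 2)) μ := by
    rw [← mgf_pos_iff, hmgf]
    have : 0 < 1 - 2 * t := by linarith
    positivity
  calc (μ {ω | (1 + c) * k ≤ ∑ i, G i ω ^ 2}).toReal
      ≤ exp (-t * ((1 + c) * k)) * mgf (fun ω ↦ ∑ i, G i ω ^ 2) μ t :=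
        measure_ge_le_exp_mul_mgf _ (by positivity) hint
    _ = exp (-t * ((1 + c) * k)) * (exp (t * η / (1 - 2 * t)) * (√(1 - 2 * t))⁻¹ ^ k) := by
        rw [hmgf, div_eq_mul_inv, inv_pow]
    _ ≤ exp (-t * ((1 + c) * k)) * (exp (t * η / (1 - 2 * t)) * exp (t + 2 * t ^ 2) ^ k) := by
        gcongr
        exact inv_sqrt_one_sub_two_mul_le_exp (by positivity) (by linarith)
    _ = exp (η * c / (4 - 2 * c) - c ^ 2 * k / 8) := by
        rw [← exp_nat_mul, ← exp_add, ← exp_add]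
        have : (4 : ℝ) - 2 * c ≠ 0 := by linarith
        congr 1
        rw [ht]
        field_simp
        ring
end

section
/- Let Y be noncentral chi-squared with k degrees of freedom and noncentrality η ≥ 0. Then for 0 ≤ c < 1: P(Y ≤ (1−c)k) ≤ exp(−ηc/(2+2c) − c²k/4). -/
open MeasureTheory ProbabilityTheory Real

/-! Chernoff bound at `λ = c / 2`: for `Y = ∑ Gᵢ²` one has
`E e^{-λY} = e^{-ηλ/(1+2λ)} (1+2λ)^{-k/2}`, computed coordinatewise by completing the square
in the Gaussian integral, and `log (1 + c) ≥ c - c² / 2` turns `(1 + c)^{-k/2}` into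
`e^{-(c - c²/2) k / 2}`. -/

namespace ProbabilityTheory

lemma gaussianPDFReal_one_mul_exp_mul_sq {m t : ℝ} (ht : t < 1 / 2) (x : ℝ) :
    gaussianPDFReal m 1 x * exp (t * x ^ 2)
      = ((√(2 * π))⁻¹ * exp (m ^ 2 * t / (1 - 2 * t)))
        * exp (-((1 - 2 * t) / 2) * (x - m / (1 - 2 * t)) ^ 2) := by
  have : 1 - 2 * t ≠ 0 := by linarith
  rw [gaussianPDFReal, NNReal.coe_one, mul_one, mul_one, mul_assoc, mul_assoc, ← exp_add,
    ← exp_add]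
  congr 2
  field_simp
  ring

lemma mgf_sq_gaussianReal (m : ℝ) {t : ℝ} (ht : t < 1 / 2) :
    mgf (fun x ↦ x ^ 2) (gaussianReal m 1) t
      = exp (m ^ 2 * t / (1 - 2 * t)) / √(1 - 2 * t) := by
  have hpos : 0 < 1 - 2 * t := by linarith
  rw [mgf, integral_gaussianReal_eq_integral_smul one_ne_zero]
  simp_rw [smul_eq_mul, gaussianPDFReal_one_mul_exp_mul_sq ht, integral_const_mul]
  rw [integral_sub_right_eq_self (fun y ↦ exp (-((1 - 2 * t) / 2) * y ^ 2)), integral_gaussian,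
    show π / ((1 - 2 * t) / 2) = 2 * π / (1 - 2 * t) by field_simp, sqrt_div (by positivity)]
  have : √(2 * π) ≠ 0 := by positivity
  field_simp

lemma mgf_sq_of_map_eq_gaussianReal {Ω : Type*} [MeasurableSpace Ω] {μ : Measure Ω}
    {X : Ω → ℝ} (hX : Measurable X) {m : ℝ} (hlaw : μ.map X = gaussianReal m 1) {t : ℝ}
    (ht : t < 1 / 2) :
    mgf (fun ω ↦ X ω ^ 2) μ t = exp (m ^ 2 * t / (1 - 2 * t)) / √(1 - 2 * t) := by
  rw [← mgf_sq_gaussianReal m ht, ← hlaw, mgf_map hX.aemeasurable (by fun_prop)]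
  rfl

lemma mgf_sum_sq_of_iIndepFun_gaussianReal {Ω ι : Type*} [MeasurableSpace Ω] {μ : Measure Ω}
    [Fintype ι] {G : ι → Ω → ℝ} {m : ι → ℝ} (hmeas : ∀ i, Measurable (G i))
    (hindep : iIndepFun G μ) (hlaw : ∀ i, μ.map (G i) = gaussianReal (m i) 1) {t : ℝ}
    (ht : t < 1 / 2) :
    mgf (fun ω ↦ ∑ i, G i ω ^ 2) μ t
      = exp ((∑ i, m i ^ 2) * t / (1 - 2 * t)) / √(1 - 2 * t) ^ Fintype.card ι := by
  have hsq : iIndepFun (fun i ω ↦ G i ω ^ 2) μ :=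
    hindep.comp (fun _ x ↦ x ^ 2) fun _ ↦ measurable_id.pow_const 2
  have hprod :
      mgf (fun ω ↦ ∑ i, G i ω ^ 2) μ t = ∏ i, mgf (fun ω ↦ G i ω ^ 2) μ t := by
    simpa only [Finset.sum_fn] using hsq.mgf_sum (fun i ↦ (hmeas i).pow_const 2) Finset.univ
  simp_rw [hprod, mgf_sq_of_map_eq_gaussianReal (hmeas _) (hlaw _) ht]
  rw [Finset.prod_div_distrib, ← exp_sum, Finset.prod_const, Finset.card_univ, Finset.sum_mul,
    Finset.sum_div]

end ProbabilityTheory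

lemma Real.sub_sq_div_two_le_log_one_add {x : ℝ} (hx : 0 ≤ x) :
    x - x ^ 2 / 2 ≤ log (1 + x) := by
  refine le_trans ?_ (le_log_one_add_of_nonneg hx)
  rw [le_div_iff₀ (by linarith)]
  nlinarith [pow_nonneg hx 3]

theorem stmt_12_general {Ω : Type*} [MeasurableSpace Ω] (μ : Measure Ω) [IsProbabilityMeasure μ]
    (k : ℕ) (G : Fin k → Ω → ℝ) (means : Fin k → ℝ) (η : ℝ)
    (hmeas : ∀ i, Measurable (G i))
    (hindep : iIndepFun G μ)
    (hlaw : ∀ i, Measure.map (G i) μ = gaussianReal (means i) 1)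
    (hη : η = ∑ i, (means i) ^ 2)
    (c : ℝ) (hc0 : 0 ≤ c) :
    (μ {ω | ∑ i, (G i ω) ^ 2 ≤ (1 - c) * k}).toReal
      ≤ Real.exp (-(η * c) / (2 + 2 * c) - c ^ 2 * k / 4) := by
  have ht : -(c / 2) < 1 / 2 := by linarith
  have hmgf := mgf_sum_sq_of_iIndepFun_gaussianReal hmeas hindep hlaw ht
  rw [← hη, Fintype.card_fin, show 1 - 2 * -(c / 2) = 1 + c by ring] at hmgf
  have hint : Integrable (fun ω ↦ exp (-(c / 2) * ∑ i, G i ω ^ 2)) μ := by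
    rw [← mgf_pos_iff, hmgf]
    positivity
  have hsqrt : exp ((c - c ^ 2 / 2) * k / 2) ≤ √(1 + c) ^ k := by
    rw [← exp_log (x := √(1 + c)) (sqrt_pos.2 (by linarith)), ← exp_nat_mul,
      log_sqrt (by linarith)]
    gcongr
    nlinarith [sub_sq_div_two_le_log_one_add hc0, k.cast_nonneg (α := ℝ)]
  calc μ.real {ω | ∑ i, G i ω ^ 2 ≤ (1 - c) * k}
      ≤ exp (c / 2 * ((1 - c) * k)) * (exp (η * -(c / 2) / (1 + c)) / √(1 + c) ^ k) := by
        simpa [hmgf] using measure_le_le_exp_mul_mgf ((1 - c) * k) (by linarith) hint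
    _ ≤ exp (c / 2 * ((1 - c) * k))
          * (exp (η * -(c / 2) / (1 + c)) / exp ((c - c ^ 2 / 2) * k / 2)) := by
        gcongr
    _ = exp (-(η * c) / (2 + 2 * c) - c ^ 2 * k / 4) := by
        rw [← exp_sub, ← exp_add]
        congr 1
        field_simp
        ring

/-- lower tail of a noncentral chi-squared variable:
P(Y ≤ (1−c)k) ≤ exp(−ηc/(2+2c) − c²k/4) for 0 ≤ c < 1. -/
theorem stmt_12 {Ω : Type*} [MeasurableSpace Ω] (μ : Measure Ω) [IsProbabilityMeasure μ]
    (k : ℕ) (G : Fin k → Ω → ℝ) (means : Fin k → ℝ) (η : ℝ)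
    (hmeas : ∀ i, Measurable (G i))
    (hindep : iIndepFun G μ)
    (hlaw : ∀ i, Measure.map (G i) μ = gaussianReal (means i) 1)
    (hη : η = ∑ i, (means i) ^ 2)
    (c : ℝ) (hc0 : 0 ≤ c) (hc1 : c < 1) :
    (μ {ω | ∑ i, (G i ω) ^ 2 ≤ (1 - c) * k}).toReal
      ≤ Real.exp (-(η * c) / (2 + 2 * c) - c ^ 2 * k / 4) :=
  stmt_12_general μ k G means η hmeas hindep hlaw hη c hc0
end
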